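/- Core of Proposition 3: let h, a, πᵢ, πⱼ, π̃, Δ₁, Δ₂, Δ₃ : ℝⁿ → ℝ and η₁,…,η₈ : ℝⁿ → ℝ nonnegative everywhere. Suppose for all x: (i) Δ₁(x) − η₁(x)h(x) − η₂(x)a(x) − πᵢ(x)² ≥ 0; (ii) Δ₂(x) − η₃(x)h(x) − η₄(x)a(x) − πⱼ(x)² ≥ 0; (iii) −Δ₃(x) − η₅(x)h(x) − η₆(x)a(x) ≥ 0; (iv) (Δ₃(x) − Δ₁(x) − Δ₂(x)) − 2π̃(x) − η₇(x)h(x) − η₈(x)a(x) ≥ 0. Then for all x with h(x) ≥ 0 and a(x) ≥ 0, it holds that πᵢ(x)·πⱼ(x) ≥ π̃(x). -/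
import Mathlib

theorem prop3_core {n : ℕ}
    (h a πi πj π' Δ₁ Δ₂ Δ₃ η₁ η₂ η₃ η₄ η₅ η₆ η₇ η₈ : (Fin n → ℝ) → ℝ)
    (hη₁ : ∀ x, 0 ≤ η₁ x) (hη₂ : ∀ x, 0 ≤ η₂ x) (hη₃ : ∀ x, 0 ≤ η₃ x)
    (hη₄ : ∀ x, 0 ≤ η₄ x) (hη₅ : ∀ x, 0 ≤ η₅ x) (hη₆ : ∀ x, 0 ≤ η₆ x)
    (hη₇ : ∀ x, 0 ≤ η₇ x) (hη₈ : ∀ x, 0 ≤ η₈ x)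
    (h1 : ∀ x, 0 ≤ Δ₁ x - η₁ x * h x - η₂ x * a x - (πi x) ^ 2)
    (h2 : ∀ x, 0 ≤ Δ₂ x - η₃ x * h x - η₄ x * a x - (πj x) ^ 2)
    (h3 : ∀ x, 0 ≤ -Δ₃ x - η₅ x * h x - η₆ x * a x)
    (h4 : ∀ x, 0 ≤ (Δ₃ x - Δ₁ x - Δ₂ x) - 2 * π' x - η₇ x * h x - η₈ x * a x) :
    ∀ x, 0 ≤ h x → 0 ≤ a x → π' x ≤ πi x * πj x := by
  intro x hx ha
  nlinarith [h1 x, h2 x, h3 x, h4 x, sq_nonneg (πi x + πj x),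
    mul_nonneg (hη₁ x) hx, mul_nonneg (hη₂ x) ha, mul_nonneg (hη₃ x) hx,
    mul_nonneg (hη₄ x) ha, mul_nonneg (hη₅ x) hx, mul_nonneg (hη₆ x) ha,
    mul_nonneg (hη₇ x) hx, mul_nonneg (hη₈ x) ha]
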